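/- arXiv:math/0612575 — 2 statements merged into one kernel-verified Lean document; each statement's English description precedes it below -/
import Mathlib

section
/- Discrete Taylor theorem with remainder (one dimension): for σ: ℤ → ℂ, ξ, η ∈ ℤ, and N ∈ ℕ, define the remainder R_N(ξ,η) := σ(ξ+η) - Σ_{α=0}^{N-1} (1/α!) Δ^α σ(ξ) η^{(α)}. Then R_N(ξ,η) = 0 if 0 ≤ η < N, and in general |R_N(ξ,η)| ≤ (1/N!) |η^{(N)}| · max_{κ between 0 and η} |Δ^N σ(ξ+κ)|, where the max is over integers κ with min(0,η) ≤ κ < max(0,η) (taken as 0 when η = 0). -/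
/-- Forward difference operator on functions `ℤ → ℂ`. -/
noncomputable def fdiffZ (σ : ℤ → ℂ) : ℤ → ℂ := fun ξ => σ (ξ + 1) - σ ξ

/-- Falling factorial `η^{(N)}` for `η : ℤ`, `N : ℕ`. -/
def fallFac (η : ℤ) (N : ℕ) : ℤ := ∏ i ∈ Finset.range N, (η - i)

noncomputable def dtRem (σ : ℤ → ℂ) (ξ η : ℤ) (N : ℕ) : ℂ :=
  σ (ξ + η) - ∑ α ∈ Finset.range N,
    (1 / (α.factorial : ℂ)) * (fdiffZ^[α] σ) ξ * (fallFac η α : ℂ)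

lemma fallFac_zero_right (η : ℤ) : fallFac η 0 = 1 := by simp [fallFac]

lemma fallFac_zero_left (N : ℕ) : fallFac 0 (N + 1) = 0 := by
  rw [fallFac]
  apply Finset.prod_eq_zero (i := 0) (by simp)
  simp

lemma fallFac_succ_left (η : ℤ) (N : ℕ) :
    fallFac (η + 1) (N + 1) = (η + 1) * fallFac η N := by
  rw [fallFac, Finset.prod_range_succ']
  rw [fallFac, mul_comm]
  congr 1
  · simp
  · apply Finset.prod_congr rfl
    intro i _
    push_cast; ring

lemma fallFac_succ_right (η : ℤ) (N : ℕ) :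
    fallFac η (N + 1) = fallFac η N * (η - N) := by
  rw [fallFac, Finset.prod_range_succ]; rfl

lemma fallFac_diff (η : ℤ) (N : ℕ) :
    fallFac (η + 1) (N + 1) - fallFac η (N + 1) = (N + 1) * fallFac η N := by
  rw [fallFac_succ_left, fallFac_succ_right]; ring

lemma dtRem_zero (σ : ℤ → ℂ) (ξ : ℤ) (N : ℕ) : dtRem σ ξ 0 (N + 1) = 0 := by
  rw [dtRem, Finset.sum_eq_single 0]
  · simp [fallFac_zero_right]
  · intro α _ hα
    obtain ⟨β, rfl⟩ := Nat.exists_eq_succ_of_ne_zero hα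
    simp [fallFac_zero_left]
  · simp

lemma dtRem_succ (σ : ℤ → ℂ) (ξ η : ℤ) (N : ℕ) :
    dtRem σ ξ (η + 1) (N + 1) = dtRem σ ξ η (N + 1) + dtRem (fdiffZ σ) ξ η N := by
  have hdf : ∀ β : ℕ, (fdiffZ^[β] (fdiffZ σ)) = fdiffZ^[β + 1] σ :=
    fun β => (Function.iterate_succ_apply fdiffZ β σ).symm
  have hsum : (∑ α ∈ Finset.range (N + 1),
        (1 / (α.factorial : ℂ)) * (fdiffZ^[α] σ) ξ * (fallFac (η + 1) α : ℂ))
      = (∑ α ∈ Finset.range (N + 1),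
        (1 / (α.factorial : ℂ)) * (fdiffZ^[α] σ) ξ * (fallFac η α : ℂ))
      + ∑ β ∈ Finset.range N,
        (1 / (β.factorial : ℂ)) * (fdiffZ^[β] (fdiffZ σ)) ξ * (fallFac η β : ℂ) := by
    rw [Finset.sum_range_succ'
        (fun α => (1 / (α.factorial : ℂ)) * (fdiffZ^[α] σ) ξ * (fallFac (η + 1) α : ℂ)) N,
      Finset.sum_range_succ'
        (fun α => (1 / (α.factorial : ℂ)) * (fdiffZ^[α] σ) ξ * (fallFac η α : ℂ)) N]
    simp only [hdf]
    have hterm : ∀ β ∈ Finset.range N,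
        (1 / (((β + 1).factorial : ℕ) : ℂ)) * (fdiffZ^[β + 1] σ) ξ * (fallFac (η + 1) (β + 1) : ℂ)
        = (1 / (((β + 1).factorial : ℕ) : ℂ)) * (fdiffZ^[β + 1] σ) ξ * (fallFac η (β + 1) : ℂ)
          + (1 / ((β.factorial : ℕ) : ℂ)) * (fdiffZ^[β + 1] σ) ξ * (fallFac η β : ℂ) := by
      intro β _
      have hff : (fallFac (η + 1) (β + 1) : ℂ)
          = (fallFac η (β + 1) : ℂ) + ((β : ℂ) + 1) * (fallFac η β : ℂ) := by
        have := fallFac_diff η β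
        have h2 : fallFac (η + 1) (β + 1) = fallFac η (β + 1) + (β + 1) * fallFac η β := by
          omega
        push_cast [h2]; ring
      have hfac : (((β + 1).factorial : ℕ) : ℂ) = ((β : ℂ) + 1) * ((β.factorial : ℕ) : ℂ) := by
        push_cast [Nat.factorial_succ]; ring
      have h0 : ((β.factorial : ℕ) : ℂ) ≠ 0 := Nat.cast_ne_zero.mpr β.factorial_ne_zero
      have h1 : ((β : ℂ) + 1) ≠ 0 := by
        have : (0:ℝ) < (β:ℝ) + 1 := by positivity
        intro h
        have := congrArg Complex.re h
        simp at this
        linarith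
      rw [hff, hfac]
      field_simp
    rw [Finset.sum_congr rfl hterm, Finset.sum_add_distrib]
    simp [fallFac_zero_right]
    ring
  simp only [dtRem]
  rw [hsum]
  have hx : ξ + (η + 1) = (ξ + η) + 1 := by ring
  rw [hx]
  have hD : fdiffZ σ (ξ + η) = σ (ξ + η + 1) - σ (ξ + η) := rfl
  rw [hD]
  ring

lemma dtRem_ofNat (σ : ℤ → ℂ) (ξ : ℤ) (N n : ℕ) :
    dtRem σ ξ (n : ℤ) (N + 1) = ∑ κ ∈ Finset.range n, dtRem (fdiffZ σ) ξ (κ : ℤ) N := by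
  induction n with
  | zero => simpa using dtRem_zero σ ξ N
  | succ m ih =>
    have : ((m + 1 : ℕ) : ℤ) = (m : ℤ) + 1 := by push_cast; ring
    rw [this, dtRem_succ, ih, Finset.sum_range_succ]

lemma dtRem_negNat (σ : ℤ → ℂ) (ξ : ℤ) (N n : ℕ) :
    dtRem σ ξ (-(n : ℤ)) (N + 1)
      = -∑ κ ∈ Finset.range n, dtRem (fdiffZ σ) ξ (-(κ : ℤ) - 1) N := by
  induction n with
  | zero => simpa using dtRem_zero σ ξ N
  | succ m ih =>
    have h1 : (-(m : ℤ)) = (-((m + 1 : ℕ) : ℤ)) + 1 := by push_cast; ring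
    have h2 := dtRem_succ σ ξ (-((m + 1 : ℕ) : ℤ)) N
    rw [← h1] at h2
    have h3 : (-((m + 1 : ℕ) : ℤ)) = -((m : ℕ) : ℤ) - 1 := by push_cast; ring
    rw [h3] at h2
    rw [Finset.sum_range_succ, h3]
    linear_combination ih - h2

lemma fallFac_nonneg {η : ℤ} (hη : 0 ≤ η) (N : ℕ) : 0 ≤ fallFac η N := by
  rcases lt_or_ge η N with h | h
  · rcases Nat.eq_zero_or_pos N with rfl | hN
    · simp [fallFac_zero_right]
    · have hmem : η.toNat ∈ Finset.range N := by
        simp only [Finset.mem_range]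
        omega
      rw [fallFac, Finset.prod_eq_zero hmem (by omega)]
  · apply Finset.prod_nonneg
    intro i hi
    simp only [Finset.mem_range] at hi
    omega

lemma fallFac_neg_sign {η : ℤ} (hη : η < 0) (N : ℕ) :
    |fallFac η N| = (-1) ^ N * fallFac η N := by
  induction N with
  | zero => simp [fallFac_zero_right]
  | succ m ih =>
    rw [fallFac_succ_right, abs_mul, ih, abs_of_nonpos (by omega : η - (m : ℤ) ≤ 0), pow_succ]
    ring

lemma sum_fallFac (N n : ℕ) :
    ((N : ℤ) + 1) * ∑ κ ∈ Finset.range n, fallFac (κ : ℤ) N = fallFac (n : ℤ) (N + 1) := by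
  induction n with
  | zero => simp [fallFac_zero_left]
  | succ m ih =>
    rw [Finset.sum_range_succ, mul_add, ih]
    have : ((m + 1 : ℕ) : ℤ) = (m : ℤ) + 1 := by push_cast; ring
    rw [this]
    have := fallFac_diff (m : ℤ) N
    omega

lemma sum_fallFac_neg (N n : ℕ) :
    ((N : ℤ) + 1) * ∑ κ ∈ Finset.range n, fallFac (-(κ : ℤ) - 1) N
      = -fallFac (-(n : ℤ)) (N + 1) := by
  induction n with
  | zero => simp [fallFac_zero_left]
  | succ m ih =>
    rw [Finset.sum_range_succ, mul_add, ih]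
    have h1 : (-(m : ℤ)) = (-(m : ℤ) - 1) + 1 := by ring
    have h2 := fallFac_diff (-(m : ℤ) - 1) N
    rw [← h1] at h2
    have h3 : (-((m + 1 : ℕ) : ℤ)) = -(m : ℤ) - 1 := by push_cast; ring
    rw [h3]
    omega

noncomputable def dtSup (σ : ℤ → ℂ) (ξ η : ℤ) (N : ℕ) : ℝ :=
  (Finset.Icc (min 0 η) (max 0 η)).sup'
    (Finset.nonempty_Icc.mpr min_le_max)
    (fun κ => ‖(fdiffZ^[N] σ) (ξ + κ)‖)

lemma dtSup_fdiff (σ : ℤ → ℂ) (ξ η : ℤ) (N : ℕ) :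
    dtSup (fdiffZ σ) ξ η N = dtSup σ ξ η (N + 1) := by
  unfold dtSup
  simp only [Function.iterate_succ_apply]

lemma dtSup_mono (σ : ℤ → ℂ) (ξ : ℤ) (N : ℕ) {η η' : ℤ}
    (h1 : min 0 η ≤ min 0 η') (h2 : max 0 η' ≤ max 0 η) :
    dtSup σ ξ η' N ≤ dtSup σ ξ η N := by
  apply Finset.sup'_le
  intro κ hκ
  apply Finset.le_sup' (fun κ => ‖(fdiffZ^[N] σ) (ξ + κ)‖)
  simp only [Finset.mem_Icc] at hκ ⊢
  omega

lemma sum_fallFac_neg_abs (N : ℕ) {n : ℕ} (hn : 1 ≤ n) :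
    ((N : ℤ) + 1) * ∑ κ ∈ Finset.range n, |fallFac (-(κ : ℤ) - 1) N|
      = |fallFac (-(n : ℤ)) (N + 1)| := by
  have h1 : ∀ κ ∈ Finset.range n,
      |fallFac (-(κ : ℤ) - 1) N| = (-1) ^ N * fallFac (-(κ : ℤ) - 1) N :=
    fun κ _ => fallFac_neg_sign (by omega) N
  rw [Finset.sum_congr rfl h1, ← Finset.mul_sum,
    fallFac_neg_sign (show -(n : ℤ) < 0 by omega) (N + 1), pow_succ]
  linear_combination ((-1 : ℤ) ^ N) * (sum_fallFac_neg N n)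

lemma dtRem_bound (N : ℕ) : ∀ (σ : ℤ → ℂ) (ξ η : ℤ),
    (N.factorial : ℝ) * ‖dtRem σ ξ η N‖ ≤ ((|fallFac η N| : ℤ) : ℝ) * dtSup σ ξ η N := by
  induction N with
  | zero =>
    intro σ ξ η
    have hmem : η ∈ Finset.Icc (min 0 η) (max 0 η) := by
      simp only [Finset.mem_Icc]
      exact ⟨min_le_right _ _, le_max_right _ _⟩
    have hle := Finset.le_sup' (fun κ => ‖(fdiffZ^[0] σ) (ξ + κ)‖) hmem
    simpa [dtSup, dtRem, fallFac_zero_right, -Finset.le_sup'_iff] using hle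
  | succ N ih =>
    intro σ ξ η
    rcases le_or_gt 0 η with hη | hη
    · lift η to ℕ using hη with n
      set S := dtSup σ ξ (n : ℤ) (N + 1) with hS
      have h1 : ‖dtRem σ ξ (n : ℤ) (N + 1)‖
          ≤ ∑ κ ∈ Finset.range n, ‖dtRem (fdiffZ σ) ξ (κ : ℤ) N‖ := by
        rw [dtRem_ofNat]; exact norm_sum_le _ _
      have hterm : ∀ κ ∈ Finset.range n,
          (N.factorial : ℝ) * ‖dtRem (fdiffZ σ) ξ (κ : ℤ) N‖
            ≤ ((fallFac (κ : ℤ) N : ℤ) : ℝ) * S := by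
        intro κ hκ
        simp only [Finset.mem_range] at hκ
        have h3 : dtSup (fdiffZ σ) ξ (κ : ℤ) N ≤ S := by
          rw [dtSup_fdiff, hS]
          apply dtSup_mono
          · omega
          · omega
        have habs : |fallFac (κ : ℤ) N| = fallFac (κ : ℤ) N :=
          abs_of_nonneg (fallFac_nonneg (by positivity) N)
        calc (N.factorial : ℝ) * ‖dtRem (fdiffZ σ) ξ (κ : ℤ) N‖
            ≤ ((|fallFac (κ : ℤ) N| : ℤ) : ℝ) * dtSup (fdiffZ σ) ξ (κ : ℤ) N := ih _ _ _
          _ ≤ ((|fallFac (κ : ℤ) N| : ℤ) : ℝ) * S := by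
              apply mul_le_mul_of_nonneg_left h3
              positivity
          _ = ((fallFac (κ : ℤ) N : ℤ) : ℝ) * S := by rw [habs]
      have habs2 : |fallFac (n : ℤ) (N + 1)| = fallFac (n : ℤ) (N + 1) :=
        abs_of_nonneg (fallFac_nonneg (by positivity) _)
      rw [habs2]
      calc ((N + 1).factorial : ℝ) * ‖dtRem σ ξ (n : ℤ) (N + 1)‖
          = ((N : ℝ) + 1) * ((N.factorial : ℝ) * ‖dtRem σ ξ (n : ℤ) (N + 1)‖) := by
            rw [Nat.factorial_succ]; push_cast; ring
        _ ≤ ((N : ℝ) + 1) * ((N.factorial : ℝ)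
              * ∑ κ ∈ Finset.range n, ‖dtRem (fdiffZ σ) ξ (κ : ℤ) N‖) := by
            gcongr
        _ = ∑ κ ∈ Finset.range n,
              ((N : ℝ) + 1) * ((N.factorial : ℝ) * ‖dtRem (fdiffZ σ) ξ (κ : ℤ) N‖) := by
            rw [Finset.mul_sum, Finset.mul_sum]
        _ ≤ ∑ κ ∈ Finset.range n, ((N : ℝ) + 1) * (((fallFac (κ : ℤ) N : ℤ) : ℝ) * S) := by
            apply Finset.sum_le_sum
            intro κ hκ
            exact mul_le_mul_of_nonneg_left (hterm κ hκ) (by positivity)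
        _ = (((N : ℝ) + 1) * ∑ κ ∈ Finset.range n, ((fallFac (κ : ℤ) N : ℤ) : ℝ)) * S := by
            rw [Finset.mul_sum, Finset.sum_mul]
            exact Finset.sum_congr rfl (fun κ _ => by ring)
        _ = ((fallFac (n : ℤ) (N + 1) : ℤ) : ℝ) * S := by
            have hcast : ((N : ℝ) + 1) * ∑ κ ∈ Finset.range n, ((fallFac (κ : ℤ) N : ℤ) : ℝ)
                = ((fallFac (n : ℤ) (N + 1) : ℤ) : ℝ) := by
              exact_mod_cast congrArg (Int.cast : ℤ → ℝ) (sum_fallFac N n)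
            rw [hcast]
    · obtain ⟨n, rfl⟩ : ∃ n : ℕ, η = -(n : ℤ) := ⟨η.natAbs, by omega⟩
      have hn : 1 ≤ n := by omega
      set S := dtSup σ ξ (-(n : ℤ)) (N + 1) with hS
      have h1 : ‖dtRem σ ξ (-(n : ℤ)) (N + 1)‖
          ≤ ∑ κ ∈ Finset.range n, ‖dtRem (fdiffZ σ) ξ (-(κ : ℤ) - 1) N‖ := by
        rw [dtRem_negNat, norm_neg]; exact norm_sum_le _ _
      have hterm : ∀ κ ∈ Finset.range n,
          (N.factorial : ℝ) * ‖dtRem (fdiffZ σ) ξ (-(κ : ℤ) - 1) N‖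
            ≤ ((|fallFac (-(κ : ℤ) - 1) N| : ℤ) : ℝ) * S := by
        intro κ hκ
        simp only [Finset.mem_range] at hκ
        have h3 : dtSup (fdiffZ σ) ξ (-(κ : ℤ) - 1) N ≤ S := by
          rw [dtSup_fdiff, hS]
          apply dtSup_mono
          · omega
          · omega
        calc (N.factorial : ℝ) * ‖dtRem (fdiffZ σ) ξ (-(κ : ℤ) - 1) N‖
            ≤ ((|fallFac (-(κ : ℤ) - 1) N| : ℤ) : ℝ) * dtSup (fdiffZ σ) ξ (-(κ : ℤ) - 1) N :=
              ih _ _ _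
          _ ≤ ((|fallFac (-(κ : ℤ) - 1) N| : ℤ) : ℝ) * S := by
              apply mul_le_mul_of_nonneg_left h3
              positivity
      calc ((N + 1).factorial : ℝ) * ‖dtRem σ ξ (-(n : ℤ)) (N + 1)‖
          = ((N : ℝ) + 1) * ((N.factorial : ℝ) * ‖dtRem σ ξ (-(n : ℤ)) (N + 1)‖) := by
            rw [Nat.factorial_succ]; push_cast; ring
        _ ≤ ((N : ℝ) + 1) * ((N.factorial : ℝ)
              * ∑ κ ∈ Finset.range n, ‖dtRem (fdiffZ σ) ξ (-(κ : ℤ) - 1) N‖) := by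
            gcongr
        _ = ∑ κ ∈ Finset.range n,
              ((N : ℝ) + 1) * ((N.factorial : ℝ) * ‖dtRem (fdiffZ σ) ξ (-(κ : ℤ) - 1) N‖) := by
            rw [Finset.mul_sum, Finset.mul_sum]
        _ ≤ ∑ κ ∈ Finset.range n,
              ((N : ℝ) + 1) * (((|fallFac (-(κ : ℤ) - 1) N| : ℤ) : ℝ) * S) := by
            apply Finset.sum_le_sum
            intro κ hκ
            exact mul_le_mul_of_nonneg_left (hterm κ hκ) (by positivity)
        _ = (((N : ℝ) + 1) * ∑ κ ∈ Finset.range n, ((|fallFac (-(κ : ℤ) - 1) N| : ℤ) : ℝ)) * S := by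
            rw [Finset.mul_sum, Finset.sum_mul]
            exact Finset.sum_congr rfl (fun κ _ => by ring)
        _ = ((|fallFac (-(n : ℤ)) (N + 1)| : ℤ) : ℝ) * S := by
            have hcast : ((N : ℝ) + 1)
                * ∑ κ ∈ Finset.range n, ((|fallFac (-(κ : ℤ) - 1) N| : ℤ) : ℝ)
                = ((|fallFac (-(n : ℤ)) (N + 1)| : ℤ) : ℝ) := by
              exact_mod_cast congrArg (Int.cast : ℤ → ℝ) (sum_fallFac_neg_abs N hn)
            rw [hcast]

lemma dtRem_eq_zero : ∀ (N : ℕ) (σ : ℤ → ℂ) (ξ η : ℤ), 0 ≤ η → η < N → dtRem σ ξ η N = 0 := by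
  intro N
  induction N with
  | zero => intro σ ξ η h1 h2; exact absurd h2 (by omega)
  | succ N ih =>
    intro σ ξ η h1 h2
    lift η to ℕ using h1 with n
    rw [dtRem_ofNat]
    apply Finset.sum_eq_zero
    intro κ hκ
    simp only [Finset.mem_range] at hκ
    exact ih _ _ _ (by positivity) (by omega)

/-- Discrete Taylor theorem with remainder in one dimension:
the remainder vanishes for `0 ≤ η < N` and in general it is bounded by
`(1/N!) |η^{(N)}|` times the maximum of `|Δ^N σ(ξ+κ)|` over `κ` between `0` and `η`. -/
theorem discrete_taylor_remainder (σ : ℤ → ℂ) (ξ η : ℤ) (N : ℕ)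
    (R : ℂ)
    (hR : R = σ (ξ + η) -
      ∑ α ∈ Finset.range N,
        (1 / (α.factorial : ℂ)) * (fdiffZ^[α] σ) ξ * (fallFac η α : ℂ)) :
    (0 ≤ η → η < N → R = 0) ∧
    ‖R‖ ≤ (1 / (N.factorial : ℝ)) * |fallFac η N| *
      (Finset.Icc (min 0 η) (max 0 η)).sup'
        (Finset.nonempty_Icc.mpr (min_le_max))
        (fun κ => ‖(fdiffZ^[N] σ) (ξ + κ)‖) := by
  have hR' : R = dtRem σ ξ η N := hR
  constructor
  · intro h1 h2
    rw [hR']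
    exact dtRem_eq_zero N σ ξ η h1 h2
  · have hb := dtRem_bound N σ ξ η
    have hfac : (0 : ℝ) < (N.factorial : ℝ) := by
      exact_mod_cast N.factorial_pos
    have hgoal : ‖R‖ ≤ (1 / (N.factorial : ℝ)) * ((|fallFac η N| : ℤ) : ℝ) * dtSup σ ξ η N := by
      rw [hR']
      calc ‖dtRem σ ξ η N‖
          = ((N.factorial : ℝ) * ‖dtRem σ ξ η N‖) / (N.factorial : ℝ) := by
            field_simp
        _ ≤ (((|fallFac η N| : ℤ) : ℝ) * dtSup σ ξ η N) / (N.factorial : ℝ) := by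
            gcongr
        _ = (1 / (N.factorial : ℝ)) * ((|fallFac η N| : ℤ) : ℝ) * dtSup σ ξ η N := by
            ring
    exact hgoal
end

section
/- Multivariate discrete Taylor remainder estimate: let p: ℤⁿ → ℂ, M ∈ ℕ, and define r_M(ξ,θ) := p(ξ+θ) - Σ_{|α|<M} (1/α!) θ^{(α)} Δ_ξ^α p(ξ). Then for every multi-index ω there is a constant c_M (depending only on M and n) such that |Δ_ξ^ω r_M(ξ,θ)| ≤ c_M · max_{|α|=M, ν ∈ Q(θ)} |θ^{(α)} Δ_ξ^{α+ω} p(ξ+ν)|, where Q(θ) := {ν ∈ ℤⁿ : min(0,θ_j) ≤ ν_j ≤ max(0,θ_j) for all j}. -/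
/-- Iterated multivariate forward difference `Δ_ξ^α`, given by its closed
binomial formula `Δ^α p(ξ) = Σ_{β ≤ α} (-1)^{|α-β|} C(α,β) p(ξ+β)`. -/
noncomputable def mdiff {n : ℕ} (α : Fin n → ℕ) (p : (Fin n → ℤ) → ℂ)
    (ξ : Fin n → ℤ) : ℂ :=
  ∑ β ∈ Finset.Iic α,
    (-1 : ℂ) ^ (∑ j, (α j - β j)) * (∏ j, ((α j).choose (β j) : ℂ)) *
      p (fun j => ξ j + β j)

/-- Multivariate falling factorial `θ^{(α)} = ∏ⱼ θⱼ^{(αⱼ)}`. -/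
def mFallFac {n : ℕ} (θ : Fin n → ℤ) (α : Fin n → ℕ) : ℤ :=
  ∏ j, ∏ i ∈ Finset.range (α j), (θ j - i)

open Finset

namespace MDT

variable {n : ℕ}

noncomputable def ev (a : AddMonoidAlgebra ℂ (Fin n → ℤ)) (p : (Fin n → ℤ) → ℂ)
    (ξ : Fin n → ℤ) : ℂ :=
  a.coeff.sum fun x c => c * p (ξ + x)

lemma ev_single (x : Fin n → ℤ) (c : ℂ) (p : (Fin n → ℤ) → ℂ) (ξ : Fin n → ℤ) :
    ev (AddMonoidAlgebra.single x c) p ξ = c * p (ξ + x) := by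
  unfold ev
  exact Finsupp.sum_single_index (by simp)

lemma ev_zero (p : (Fin n → ℤ) → ℂ) (ξ : Fin n → ℤ) :
    ev (0 : AddMonoidAlgebra ℂ (Fin n → ℤ)) p ξ = 0 := by
  simp [ev]

lemma ev_add (a b : AddMonoidAlgebra ℂ (Fin n → ℤ)) (p : (Fin n → ℤ) → ℂ) (ξ : Fin n → ℤ) :
    ev (a + b) p ξ = ev a p ξ + ev b p ξ := by
  unfold ev
  exact Finsupp.sum_add_index' (by simp) (by intros; ring)

lemma ev_sum {ι : Type*} (s : Finset ι) (f : ι → AddMonoidAlgebra ℂ (Fin n → ℤ))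
    (p : (Fin n → ℤ) → ℂ) (ξ : Fin n → ℤ) :
    ev (∑ i ∈ s, f i) p ξ = ∑ i ∈ s, ev (f i) p ξ := by
  induction s using Finset.cons_induction with
  | empty => simp [ev_zero]
  | cons i s hi ih => rw [Finset.sum_cons, Finset.sum_cons, ev_add, ih]

def ejZ (j : Fin n) : Fin n → ℤ := fun i => if i = j then 1 else 0

noncomputable def opj (j : Fin n) : AddMonoidAlgebra ℂ (Fin n → ℤ) :=
  AddMonoidAlgebra.single (ejZ j) 1 - 1

noncomputable def op (α : Fin n → ℕ) : AddMonoidAlgebra ℂ (Fin n → ℤ) :=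
  ∏ j, opj j ^ α j

lemma opj_pow (j : Fin n) (m : ℕ) :
    opj j ^ m = ∑ b ∈ range (m + 1),
      AddMonoidAlgebra.single (b • ejZ j) (((-1 : ℂ)) ^ (m - b) * (m.choose b : ℂ)) := by
  rw [opj, sub_pow]
  refine Finset.sum_congr rfl fun b hb => ?_
  rw [mem_range, Nat.lt_succ_iff] at hb
  have h1 : (AddMonoidAlgebra.single (ejZ j) (1:ℂ)) ^ b
      = AddMonoidAlgebra.single (b • ejZ j) (1:ℂ) := by
    rw [AddMonoidAlgebra.single_pow, one_pow]
  have h2 : ((-1 : AddMonoidAlgebra ℂ (Fin n → ℤ))) ^ (b + m)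
      = AddMonoidAlgebra.single (0 : Fin n → ℤ) ((-1 : ℂ) ^ (m - b)) := by
    have : (-1 : AddMonoidAlgebra ℂ (Fin n → ℤ)) = AddMonoidAlgebra.single 0 (-1 : ℂ) := by
      rw [AddMonoidAlgebra.one_def, AddMonoidAlgebra.single_neg]
    rw [this, AddMonoidAlgebra.single_pow, smul_zero]
    congr 1
    have : b + m = (m - b) + 2 * b := by omega
    rw [this, pow_add, pow_mul]
    simp
  rw [h1, h2, one_pow, AddMonoidAlgebra.natCast_def, mul_one,
    AddMonoidAlgebra.single_mul_single, AddMonoidAlgebra.single_mul_single]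
  simp [add_comm]

lemma op_eq (α : Fin n → ℕ) : op α
    = ∑ β ∈ Fintype.piFinset (fun j => range (α j + 1)),
        AddMonoidAlgebra.single (fun i => (β i : ℤ))
          ((-1 : ℂ) ^ (∑ j, (α j - β j)) * ∏ j, ((α j).choose (β j) : ℂ)) := by
  unfold op
  rw [show (∏ j, opj j ^ α j) = ∏ j, ∑ b ∈ range (α j + 1),
      AddMonoidAlgebra.single (b • ejZ j) (((-1 : ℂ)) ^ (α j - b) * ((α j).choose b : ℂ))
    from Finset.prod_congr rfl fun j _ => opj_pow j (α j)]
  rw [Finset.prod_univ_sum]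
  refine Finset.sum_congr rfl fun β hβ => ?_
  rw [AddMonoidAlgebra.prod_single]
  congr 1
  · funext i
    show (∑ j, β j • ejZ j) i = (β i : ℤ)
    rw [Finset.sum_apply]
    have : ∀ j, (β j • ejZ j) i = if j = i then (β j : ℤ) else 0 := by
      intro j
      simp only [Pi.smul_apply, ejZ]
      by_cases h : i = j <;> simp [h, eq_comm]
    simp only [this]
    rw [Finset.sum_ite_eq' univ i fun j => (β j : ℤ)]
    simp
  · rw [Finset.prod_mul_distrib, Finset.prod_pow_eq_pow_sum]

lemma mdiff_eq_ev (α : Fin n → ℕ) (p : (Fin n → ℤ) → ℂ) (ξ : Fin n → ℤ) :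
    mdiff α p ξ = ev (op α) p ξ := by
  rw [op_eq, ev_sum]
  rw [mdiff, show Finset.Iic α = Fintype.piFinset (fun j => range (α j + 1)) by
    ext β; simp [Finset.mem_Iic, Fintype.mem_piFinset, Pi.le_def, Nat.lt_succ_iff]]
  refine Finset.sum_congr rfl fun β hβ => ?_
  rw [ev_single]
  rfl

lemma ev_mul (a b : AddMonoidAlgebra ℂ (Fin n → ℤ)) (p : (Fin n → ℤ) → ℂ) (ξ : Fin n → ℤ) :
    ev (a * b) p ξ = ev a (ev b p) ξ := by
  induction a using AddMonoidAlgebra.induction_linear with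
  | zero => simp [ev_zero, zero_mul]
  | add f g hf hg => rw [add_mul, ev_add, ev_add, hf, hg]
  | single x c =>
    induction b using AddMonoidAlgebra.induction_linear with
    | zero =>
      simp only [mul_zero, ev_zero]
      rw [show ev (0 : AddMonoidAlgebra ℂ (Fin n → ℤ)) p = fun _ => 0 from
        funext fun _ => ev_zero _ _]
      simp [ev_single]
    | add f g hf hg =>
      rw [mul_add, ev_add, hf, hg, show ev (f + g) p = fun ξ => ev f p ξ + ev g p ξ from
        funext fun _ => ev_add _ _ _ _]
      simp only [ev_single]
      ring
    | single y d =>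
      rw [AddMonoidAlgebra.single_mul_single, ev_single,
        show ev (AddMonoidAlgebra.single y d) p = fun ξ => d * p (ξ + y) from
        funext fun _ => ev_single _ _ _ _, ev_single]
      rw [add_assoc]
      ring

lemma op_add (α ω : Fin n → ℕ) : op (α + ω) = op α * op ω := by
  unfold op
  rw [← Finset.prod_mul_distrib]
  exact Finset.prod_congr rfl fun j _ => by rw [Pi.add_apply, pow_add]

lemma mdiff_zero (p : (Fin n → ℤ) → ℂ) (ξ : Fin n → ℤ) : mdiff 0 p ξ = p ξ := by
  rw [mdiff_eq_ev]
  have : op (0 : Fin n → ℕ) = 1 := by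
    unfold op; simp
  rw [this, AddMonoidAlgebra.one_def, ev_single, one_mul, add_zero]

lemma mdiff_add (α ω : Fin n → ℕ) (p : (Fin n → ℤ) → ℂ) (ξ : Fin n → ℤ) :
    mdiff (α + ω) p ξ = mdiff α (fun η => mdiff ω p η) ξ := by
  rw [mdiff_eq_ev, op_add, ev_mul, mdiff_eq_ev]
  congr 1
  funext η
  rw [mdiff_eq_ev]

lemma mdiff_sub_fun (α : Fin n → ℕ) (f g : (Fin n → ℤ) → ℂ) (ξ : Fin n → ℤ) :
    mdiff α (fun η => f η - g η) ξ = mdiff α f ξ - mdiff α g ξ := by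
  simp [mdiff, mul_sub, Finset.sum_sub_distrib]

lemma mdiff_sum_fun {ι : Type*} (α : Fin n → ℕ) (s : Finset ι) (F : ι → (Fin n → ℤ) → ℂ)
    (ξ : Fin n → ℤ) :
    mdiff α (fun η => ∑ i ∈ s, F i η) ξ = ∑ i ∈ s, mdiff α (F i) ξ := by
  unfold mdiff
  rw [Finset.sum_comm]
  exact Finset.sum_congr rfl fun β _ => by rw [Finset.mul_sum]

lemma mdiff_const_mul (α : Fin n → ℕ) (c : ℂ) (f : (Fin n → ℤ) → ℂ) (ξ : Fin n → ℤ) :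
    mdiff α (fun η => c * f η) ξ = c * mdiff α f ξ := by
  unfold mdiff
  rw [Finset.mul_sum]
  exact Finset.sum_congr rfl fun β _ => by ring

lemma mdiff_shift (α : Fin n → ℕ) (θ : Fin n → ℤ) (p : (Fin n → ℤ) → ℂ) (ξ : Fin n → ℤ) :
    mdiff α (fun η => p (fun j => η j + θ j)) ξ = mdiff α p (fun j => ξ j + θ j) := by
  unfold mdiff
  refine Finset.sum_congr rfl fun β _ => ?_
  have h : ((fun η => p fun j => η j + θ j) fun j => ξ j + (β j : ℤ))
      = p fun j => (fun j => ξ j + θ j) j + (β j : ℤ) := by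
    show p _ = p _
    congr 1
    funext j
    ring
  rw [h]

/-- single-coordinate multi-index -/
def aj (j : Fin n) (k : ℕ) : Fin n → ℕ := fun i => if i = j then k else 0

/-- single-coordinate forward difference -/
def sd (j : Fin n) (p : (Fin n → ℤ) → ℂ) : (Fin n → ℤ) → ℂ :=
  fun η => p (η + ejZ j) - p η

lemma op_aj (j : Fin n) (k : ℕ) : op (aj j k) = opj j ^ k := by
  unfold op aj
  rw [Finset.prod_eq_single j (fun i _ hi => by simp [hi]) (by simp)]
  simp

lemma ev_sub (a b : AddMonoidAlgebra ℂ (Fin n → ℤ)) (p : (Fin n → ℤ) → ℂ) (ξ : Fin n → ℤ) :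
    ev (a - b) p ξ = ev a p ξ - ev b p ξ := by
  unfold ev
  exact Finsupp.sum_sub_index (by intros; ring)

lemma ev_opj (j : Fin n) (p : (Fin n → ℤ) → ℂ) (ξ : Fin n → ℤ) :
    ev (opj j) p ξ = sd j p ξ := by
  rw [opj, ev_sub, AddMonoidAlgebra.one_def, ev_single, ev_single, sd]
  simp

lemma mdiff_aj_succ (j : Fin n) (m : ℕ) (p : (Fin n → ℤ) → ℂ) (ξ : Fin n → ℤ) :
    mdiff (aj j (m + 1)) p ξ = mdiff (aj j m) (sd j p) ξ := by
  rw [mdiff_eq_ev, op_aj, pow_succ, ev_mul, mdiff_eq_ev, op_aj]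
  congr 1
  funext η
  rw [ev_opj]

/-- one-variable falling factorial -/
def tff (t : ℤ) (k : ℕ) : ℤ := ∏ i ∈ range k, (t - i)

/-- absolute value of the generalized binomial coefficient -/
def w (t : ℤ) (k : ℕ) : ℕ := if 0 ≤ t then t.toNat.choose k else ((-t).toNat + k - 1).choose k

/-- generalized binomial coefficient -/
noncomputable def C (t : ℤ) (k : ℕ) : ℂ := (tff t k : ℂ) / (k.factorial : ℂ)

lemma tff_zero_right (t : ℤ) : tff t 0 = 1 := by simp [tff]

lemma C_zero_right (t : ℤ) : C t 0 = 1 := by simp [C, tff_zero_right]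

lemma tff_succ (t : ℤ) (k : ℕ) : tff t (k + 1) = tff t k * (t - k) := by
  rw [tff, Finset.prod_range_succ, tff]

lemma tff_succ' (t : ℤ) (k : ℕ) : tff (t + 1) (k + 1) = (t + 1) * tff t k := by
  rw [tff, Finset.prod_range_succ']
  rw [show (∏ i ∈ range k, (t + 1 - (↑(i + 1) : ℤ))) = ∏ i ∈ range k, (t - i) from
    Finset.prod_congr rfl fun i _ => by push_cast; ring]
  rw [tff]
  push_cast
  ring

lemma tff_pascal (t : ℤ) (k : ℕ) : tff (t + 1) (k + 1) = tff t (k + 1) + (k + 1) * tff t k := by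
  rw [tff_succ', tff_succ]
  ring

lemma tff_eq_zero_of_lt {t : ℤ} {k : ℕ} (h0 : 0 ≤ t) (h : t < k) : tff t k = 0 := by
  apply Finset.prod_eq_zero (i := t.toNat)
  · rw [Finset.mem_range]
    omega
  · omega

lemma tff_natCast (m k : ℕ) : tff (m : ℤ) k = (m.descFactorial k : ℤ) := by
  induction k with
  | zero => simp [tff_zero_right]
  | succ k ih =>
    by_cases hk : k + 1 ≤ m
    · rw [tff_succ, ih, Nat.descFactorial_succ]
      push_cast [show k ≤ m by omega]
      ring
    · rw [tff_eq_zero_of_lt (by positivity) (by exact_mod_cast (by omega : (m:ℤ) < k + 1)),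
        Nat.descFactorial_eq_zero_iff_lt.2 (by omega)]
      simp

lemma tff_neg_natCast (m k : ℕ) : tff (-(m : ℤ)) k = (-1) ^ k * (m.ascFactorial k : ℤ) := by
  induction k with
  | zero => simp [tff_zero_right]
  | succ k ih =>
    rw [tff_succ, ih, Nat.ascFactorial_succ]
    push_cast
    ring

lemma natAbs_tff (t : ℤ) (k : ℕ) : (tff t k).natAbs = w t k * k.factorial := by
  rcases le_or_gt 0 t with h | h
  · obtain ⟨m, rfl⟩ : ∃ m : ℕ, t = (m : ℤ) := ⟨t.toNat, by omega⟩
    rw [tff_natCast, w, if_pos h, Int.natAbs_natCast, Nat.descFactorial_eq_factorial_mul_choose]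
    simp [Nat.mul_comm]
  · obtain ⟨m, rfl⟩ : ∃ m : ℕ, t = -(m : ℤ) := ⟨(-t).toNat, by omega⟩
    rw [tff_neg_natCast, w, if_neg (by omega)]
    rw [Int.natAbs_mul, Int.natAbs_pow]
    simp only [Int.natAbs_neg, Int.natAbs_one, one_pow, one_mul, Int.natAbs_natCast]
    rw [Nat.ascFactorial_eq_factorial_mul_choose']
    simp [Nat.mul_comm, Int.natAbs_neg]

lemma w_zero_right (t : ℤ) : w t 0 = 1 := by
  unfold w
  split <;> simp

lemma w_zero_of_pos {M : ℕ} (h : 1 ≤ M) : w 0 M = 0 := by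
  rw [w, if_pos le_rfl, Int.toNat_zero, Nat.choose_eq_zero_of_lt (by omega)]

lemma w_succ_pos (i : ℕ) (M : ℕ) : w ((i : ℤ) + 1) (M + 1) = w (i : ℤ) (M + 1) + w (i : ℤ) M := by
  rw [w, w, w, if_pos (by positivity), if_pos (by positivity), if_pos (by positivity)]
  rw [show ((i : ℤ) + 1).toNat = i + 1 by omega, show ((i : ℤ)).toNat = i by omega]
  rw [Nat.choose_succ_succ' i M]
  omega

lemma w_neg_eq (i : ℕ) (k : ℕ) : w (-(i : ℤ)) k = (i + k - 1).choose k := by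
  rcases Nat.eq_zero_or_pos i with rfl | hi
  · rw [show (-(0:ℕ) : ℤ) = 0 by simp, w, if_pos le_rfl, Int.toNat_zero]
    rcases Nat.eq_zero_or_pos k with rfl | hk
    · simp
    · rw [Nat.choose_eq_zero_of_lt (by omega), Nat.choose_eq_zero_of_lt (by omega)]
  · rw [w, if_neg (by omega), show (-(-(i:ℤ))).toNat = i by omega]

lemma w_succ_neg (i : ℕ) (M : ℕ) :
    w (-(i : ℤ)) (M + 1) + w (-(i : ℤ) - 1) M = w (-(i : ℤ) - 1) (M + 1) := by
  rw [show (-(i:ℤ) - 1) = -((i + 1 : ℕ) : ℤ) by push_cast; ring]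
  rw [w_neg_eq, w_neg_eq, w_neg_eq]
  rw [show i + (M + 1) - 1 = i + M by omega, show i + 1 + M - 1 = i + M by omega,
    show i + 1 + (M + 1) - 1 = i + M + 1 by omega]
  rw [Nat.choose_succ_succ' (i + M) M]
  omega

lemma C_pascal (t : ℤ) (k : ℕ) : C (t + 1) (k + 1) = C t (k + 1) + C t k := by
  have h : ((tff (t + 1) (k + 1) : ℂ)) = (tff t (k + 1) : ℂ) + (k + 1) * (tff t k : ℂ) := by
    exact_mod_cast congrArg (fun z : ℤ => (z : ℂ)) (tff_pascal t k)
  unfold C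
  rw [h, Nat.factorial_succ]
  have h1 : ((k.factorial : ℂ)) ≠ 0 := Nat.cast_ne_zero.2 k.factorial_ne_zero
  have h2 : ((k : ℂ) + 1) ≠ 0 := by
    have := Nat.cast_add_one_ne_zero (R := ℂ) k
    exact_mod_cast this
  push_cast
  field_simp

lemma norm_tff (t : ℤ) (k : ℕ) : ‖((tff t k : ℤ) : ℂ)‖ = (w t k : ℝ) * (k.factorial : ℝ) := by
  rw [Complex.norm_intCast]
  rw [show |(tff t k : ℝ)| = ((tff t k).natAbs : ℝ) by
    rw [Nat.cast_natAbs]; push_cast; rfl]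
  rw [natAbs_tff]
  push_cast
  ring

lemma norm_C (t : ℤ) (k : ℕ) : ‖C t k‖ = (w t k : ℝ) := by
  rw [C, norm_div, norm_tff, Complex.norm_natCast]
  have : (k.factorial : ℝ) ≠ 0 := Nat.cast_ne_zero.2 k.factorial_ne_zero
  rw [mul_div_assoc, div_self this, mul_one]

lemma w_eq_zero_of_tff {t : ℤ} {k : ℕ} (h : tff t k = 0) : w t k = 0 := by
  have := natAbs_tff t k
  rw [h] at this
  simp only [Int.natAbs_zero] at this
  exact (Nat.mul_eq_zero.1 this.symm).resolve_right (Nat.factorial_ne_zero k)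

lemma aj_zero (j : Fin n) : aj j 0 = 0 := by
  funext i; simp [aj]

lemma Fstep (j : Fin n) (M : ℕ) (t : ℤ) (q : (Fin n → ℤ) → ℂ) (η : Fin n → ℤ) :
    q (η + (t + 1) • ejZ j) - ∑ k ∈ range (M + 1), C (t + 1) k * mdiff (aj j k) q η
    = (q (η + t • ejZ j) - ∑ k ∈ range (M + 1), C t k * mdiff (aj j k) q η)
    + (sd j q (η + t • ejZ j) - ∑ k ∈ range M, C t k * mdiff (aj j k) (sd j q) η) := by
  have hpt : η + (t + 1) • ejZ j = (η + t • ejZ j) + ejZ j := by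
    rw [add_smul, one_smul, add_assoc]
  have hsd : sd j q (η + t • ejZ j) = q (η + (t + 1) • ejZ j) - q (η + t • ejZ j) := by
    rw [sd, hpt]
  have hY : ∀ k, mdiff (aj j k) (sd j q) η = mdiff (aj j (k + 1)) q η :=
    fun k => (mdiff_aj_succ j k q η).symm
  have hsum : ∑ k ∈ range (M + 1), C (t + 1) k * mdiff (aj j k) q η
      = ∑ k ∈ range (M + 1), C t k * mdiff (aj j k) q η
      + ∑ k ∈ range M, C t k * mdiff (aj j k) (sd j q) η := by
    rw [Finset.sum_range_succ' (fun k => C (t + 1) k * mdiff (aj j k) q η) M,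
        Finset.sum_range_succ' (fun k => C t k * mdiff (aj j k) q η) M]
    simp only [hY, C_pascal, C_zero_right]
    rw [Finset.sum_congr rfl
      (fun k _ => add_mul (C t (k + 1)) (C t k) (mdiff (aj j (k + 1)) q η)),
      Finset.sum_add_distrib]
    ring
  rw [hsd, hsum]
  ring

lemma oneD (j : Fin n) (M : ℕ) : ∀ (t : ℤ) (q : (Fin n → ℤ) → ℂ) (η : Fin n → ℤ) (B₀ : ℝ),
    0 ≤ B₀ →
    (∀ s : ℤ, min 0 t ≤ s → s ≤ max 0 t → ‖mdiff (aj j M) q (η + s • ejZ j)‖ ≤ B₀) →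
    ‖q (η + t • ejZ j) - ∑ k ∈ range M, C t k * mdiff (aj j k) q η‖ ≤ (w t M : ℝ) * B₀ := by
  induction M with
  | zero =>
    intro t q η B₀ hB₀ h
    rw [Finset.range_zero, Finset.sum_empty, sub_zero, w_zero_right]
    have := h t (min_le_right 0 t) (le_max_right 0 t)
    rw [aj_zero, mdiff_zero] at this
    simpa using this
  | succ M ihM =>
    intro t
    induction t using Int.induction_on with
    | zero =>
      intro q η B₀ hB₀ h
      have hs : ∑ k ∈ range (M + 1), C 0 k * mdiff (aj j k) q η = q η := by
        rw [Finset.sum_eq_single 0]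
        · rw [C_zero_right, one_mul, aj_zero, mdiff_zero]
        · intro k _ hk
          have : tff 0 k = 0 := tff_eq_zero_of_lt le_rfl (by exact_mod_cast Nat.pos_of_ne_zero hk)
          rw [C, this]
          simp
        · simp
      rw [hs, zero_smul, add_zero, sub_self, norm_zero, w_zero_of_pos (by omega)]
      simp [hB₀]
    | succ i ih =>
      intro q η B₀ hB₀ h
      have hQ : ∀ s : ℤ, min 0 (i:ℤ) ≤ s → s ≤ max 0 (i:ℤ) →
          min 0 ((i:ℤ)+1) ≤ s ∧ s ≤ max 0 ((i:ℤ)+1) := by intro s h1 h2; omega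
      have h1 : ‖q (η + (i:ℤ) • ejZ j) - ∑ k ∈ range (M+1), C (i:ℤ) k * mdiff (aj j k) q η‖
          ≤ (w (i:ℤ) (M+1) : ℝ) * B₀ :=
        ih q η B₀ hB₀ (fun s hs1 hs2 => h s (hQ s hs1 hs2).1 (hQ s hs1 hs2).2)
      have h2 : ‖sd j q (η + (i:ℤ) • ejZ j)
            - ∑ k ∈ range M, C (i:ℤ) k * mdiff (aj j k) (sd j q) η‖
          ≤ (w (i:ℤ) M : ℝ) * B₀ := by
        apply ihM (i:ℤ) (sd j q) η B₀ hB₀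
        intro s hs1 hs2
        rw [← mdiff_aj_succ]
        exact h s (hQ s hs1 hs2).1 (hQ s hs1 hs2).2
      rw [Fstep j M (i:ℤ) q η]
      calc ‖_ + _‖ ≤ _ := norm_add_le _ _
        _ ≤ (w (i:ℤ) (M+1) : ℝ) * B₀ + (w (i:ℤ) M : ℝ) * B₀ := add_le_add h1 h2
        _ = ((w (i:ℤ) (M+1) + w (i:ℤ) M : ℕ) : ℝ) * B₀ := by push_cast; ring
        _ = (w ((i:ℤ)+1) (M+1) : ℝ) * B₀ := by rw [← w_succ_pos]
    | pred i ih =>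
      intro q η B₀ hB₀ h
      have hQ : ∀ s : ℤ, min 0 (-(i:ℤ)) ≤ s → s ≤ max 0 (-(i:ℤ)) →
          min 0 (-(i:ℤ)-1) ≤ s ∧ s ≤ max 0 (-(i:ℤ)-1) := by intro s h1 h2; omega
      have key := Fstep j M (-(i:ℤ)-1) q η
      rw [show (-(i:ℤ)-1) + 1 = -(i:ℤ) by ring] at key
      have key2 : q (η + (-(i:ℤ)-1) • ejZ j)
            - ∑ k ∈ range (M+1), C (-(i:ℤ)-1) k * mdiff (aj j k) q η
          = (q (η + (-(i:ℤ)) • ejZ j)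
            - ∑ k ∈ range (M+1), C (-(i:ℤ)) k * mdiff (aj j k) q η)
          - (sd j q (η + (-(i:ℤ)-1) • ejZ j)
            - ∑ k ∈ range M, C (-(i:ℤ)-1) k * mdiff (aj j k) (sd j q) η) := by
        rw [key]; ring
      have h1 : ‖q (η + (-(i:ℤ)) • ejZ j)
            - ∑ k ∈ range (M+1), C (-(i:ℤ)) k * mdiff (aj j k) q η‖
          ≤ (w (-(i:ℤ)) (M+1) : ℝ) * B₀ :=
        ih q η B₀ hB₀ (fun s hs1 hs2 => h s (hQ s hs1 hs2).1 (hQ s hs1 hs2).2)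
      have h2 : ‖sd j q (η + (-(i:ℤ)-1) • ejZ j)
            - ∑ k ∈ range M, C (-(i:ℤ)-1) k * mdiff (aj j k) (sd j q) η‖
          ≤ (w (-(i:ℤ)-1) M : ℝ) * B₀ := by
        apply ihM (-(i:ℤ)-1) (sd j q) η B₀ hB₀
        intro s hs1 hs2
        rw [← mdiff_aj_succ]
        exact h s (by omega) (by omega)
      rw [key2]
      calc ‖_ - _‖ ≤ _ := norm_sub_le _ _
        _ ≤ (w (-(i:ℤ)) (M+1) : ℝ) * B₀ + (w (-(i:ℤ)-1) M : ℝ) * B₀ := add_le_add h1 h2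
        _ = ((w (-(i:ℤ)) (M+1) + w (-(i:ℤ)-1) M : ℕ) : ℝ) * B₀ := by push_cast; ring
        _ = (w (-(i:ℤ)-1) (M+1) : ℝ) * B₀ := by rw [w_succ_neg]

lemma mFallFac_eq (θ : Fin n → ℤ) (α : Fin n → ℕ) :
    mFallFac θ α = ∏ i, tff (θ i) (α i) := rfl

lemma sum_aj (j : Fin n) (k : ℕ) : (∑ i, aj j k i) = k := by
  unfold aj
  rw [Finset.sum_ite_eq' univ j (fun _ => k)]
  simp

lemma mFallFac_eq_zero {θ : Fin n → ℤ} {α : Fin n → ℕ} (i : Fin n)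
    (h0 : θ i = 0) (hα : α i ≠ 0) : mFallFac θ α = 0 := by
  rw [mFallFac_eq]
  apply Finset.prod_eq_zero (mem_univ i)
  rw [h0]
  exact tff_eq_zero_of_lt le_rfl (by exact_mod_cast Nat.pos_of_ne_zero hα)

lemma mFallFac_aj (θ : Fin n → ℤ) (j : Fin n) (k : ℕ) :
    mFallFac θ (aj j k) = tff (θ j) k := by
  rw [mFallFac_eq]
  rw [Finset.prod_eq_single j (fun i _ hi => by simp [aj, hi, tff_zero_right]) (by simp)]
  simp [aj]

lemma mFallFac_split (θ : Fin n → ℤ) (j : Fin n) (k : ℕ) {α' : Fin n → ℕ}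
    (hα' : α' j = 0) :
    mFallFac θ (α' + aj j k) = mFallFac (Function.update θ j 0) α' * tff (θ j) k := by
  rw [mFallFac_eq, mFallFac_eq]
  rw [← Finset.mul_prod_erase univ (fun i => tff (θ i) ((α' + aj j k) i)) (mem_univ j),
      ← Finset.mul_prod_erase univ (fun i => tff (Function.update θ j 0 i) (α' i)) (mem_univ j)]
  have h1 : (α' + aj j k) j = k := by simp [aj, hα']
  have h2 : Function.update θ j 0 j = 0 := Function.update_self j 0 θ
  rw [h1, h2, hα', tff_zero_right]
  rw [Finset.prod_congr rfl (fun i hi => by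
    have hij : i ≠ j := Finset.ne_of_mem_erase hi
    show tff (θ i) ((α' + aj j k) i) = tff (Function.update θ j 0 i) (α' i)
    rw [Function.update_of_ne hij, Pi.add_apply, show aj j k i = 0 by simp [aj, hij],
      Nat.add_zero])]
  ring

lemma factorial_split (j : Fin n) (k : ℕ) {α' : Fin n → ℕ} (hα' : α' j = 0) :
    (∏ i, ((α' + aj j k) i).factorial) = k.factorial * ∏ i, (α' i).factorial := by
  rw [← Finset.mul_prod_erase univ (fun i => ((α' + aj j k) i).factorial) (mem_univ j),
      ← Finset.mul_prod_erase univ (fun i => (α' i).factorial) (mem_univ j)]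
  have h1 : (α' + aj j k) j = k := by simp [aj, hα']
  rw [h1, hα', Nat.factorial_zero]
  rw [Finset.prod_congr rfl (fun i hi => by
    have hij : i ≠ j := Finset.ne_of_mem_erase hi
    show (((α' + aj j k) i).factorial) = ((α' i).factorial)
    rw [Pi.add_apply, show aj j k i = 0 by simp [aj, hij], Nat.add_zero])]
  ring

/-- the summand of the Taylor polynomial -/
noncomputable def term (θ : Fin n → ℤ) (p : (Fin n → ℤ) → ℂ) (ξ : Fin n → ℤ)
    (α : Fin n → ℕ) : ℂ :=
  (1 / ((∏ i, (α i).factorial : ℕ) : ℂ)) * ((mFallFac θ α : ℤ) : ℂ) * mdiff α p ξ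

lemma term_eq_zero {θ : Fin n → ℤ} {p ξ} {α : Fin n → ℕ} (i : Fin n)
    (h0 : θ i = 0) (hα : α i ≠ 0) : term θ p ξ α = 0 := by
  rw [term, mFallFac_eq_zero i h0 hα]
  simp

lemma sum_update_zero (α : Fin n → ℕ) (j : Fin n) :
    (∑ i, Function.update α j 0 i) + α j = ∑ i, α i := by
  rw [Finset.sum_update_of_mem (mem_univ j), ← Finset.add_sum_erase univ α (mem_univ j),
    Finset.erase_eq]
  omega

lemma term_split (θ : Fin n → ℤ) (j : Fin n) (k : ℕ) (α' : Fin n → ℕ)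
    (hj0 : α' j = 0) (p : (Fin n → ℤ) → ℂ) (ξ : Fin n → ℤ) :
    term θ p ξ (α' + aj j k)
      = C (θ j) k * term (Function.update θ j 0) (mdiff (aj j k) p) ξ α' := by
  rw [term, term, mFallFac_split θ j k hj0, factorial_split j k hj0,
    mdiff_add α' (aj j k) p ξ]
  have hfac : ((k.factorial : ℂ)) ≠ 0 := Nat.cast_ne_zero.2 k.factorial_ne_zero
  have hfac2 : (((∏ i, (α' i).factorial : ℕ) : ℂ)) ≠ 0 :=
    Nat.cast_ne_zero.2 (Finset.prod_ne_zero_iff.2 fun i _ => (α' i).factorial_ne_zero)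
  rw [C]
  push_cast
  field_simp

lemma Tsum_fiber (j : Fin n) (M k : ℕ) (hk : k < M) (θ : Fin n → ℤ)
    (p : (Fin n → ℤ) → ℂ) (ξ : Fin n → ℤ) :
    ∑ α ∈ ((Finset.Iic (fun _ => M : Fin n → ℕ)).filter
        (fun α : Fin n → ℕ => (∑ i, α i) < M)).filter (fun α => α j = k),
      term θ p ξ α
    = C (θ j) k * ∑ α' ∈ (Finset.Iic (fun _ => M - k : Fin n → ℕ)).filter
        (fun α' : Fin n → ℕ => (∑ i, α' i) < M - k),
      term (Function.update θ j 0) (mdiff (aj j k) p) ξ α' := by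
  -- restrict RHS inner sum to α' with α' j = 0
  rw [show ∑ α' ∈ (Finset.Iic (fun _ => M - k : Fin n → ℕ)).filter
        (fun α' : Fin n → ℕ => (∑ i, α' i) < M - k),
      term (Function.update θ j 0) (mdiff (aj j k) p) ξ α'
    = ∑ α' ∈ ((Finset.Iic (fun _ => M - k : Fin n → ℕ)).filter
        (fun α' : Fin n → ℕ => (∑ i, α' i) < M - k)).filter (fun α' => α' j = 0),
      term (Function.update θ j 0) (mdiff (aj j k) p) ξ α' from
    (Finset.sum_filter_of_ne (fun α' _ hne => by
      by_contra hj0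
      exact hne (term_eq_zero j (Function.update_self j 0 θ) hj0))).symm]
  rw [Finset.mul_sum]
  refine Finset.sum_nbij' (fun α => Function.update α j 0) (fun α' => α' + aj j k)
    ?_ ?_ ?_ ?_ ?_
  · -- maps to
    intro α hα
    simp only [Finset.mem_filter, Finset.mem_Iic] at hα ⊢
    obtain ⟨⟨hle, hsum⟩, hjk⟩ := hα
    have hupd : (∑ i, Function.update α j 0 i) + α j = ∑ i, α i := sum_update_zero α j
    refine ⟨⟨?_, show (∑ i, Function.update α j 0 i) < M - k by omega⟩,
      Function.update_self j 0 α⟩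
    intro i
    rcases eq_or_ne i j with rfl | hij
    · simp
    · rw [Function.update_of_ne hij]
      show α i ≤ M - k
      have h2 : α i + α j ≤ ∑ l, α l := by
        have := Finset.add_sum_erase univ α (mem_univ j)
        have h3 : α i ≤ ∑ l ∈ univ.erase j, α l :=
          Finset.single_le_sum (fun _ _ => Nat.zero_le _)
            (Finset.mem_erase.2 ⟨hij, mem_univ i⟩)
        omega
      omega
  · -- inverse maps to
    intro α' hα'
    simp only [Finset.mem_filter, Finset.mem_Iic] at hα' ⊢
    obtain ⟨⟨hle, hsum⟩, hj0⟩ := hα'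
    have hsum2 : (∑ i, (α' + aj j k) i) = (∑ i, α' i) + k := by
      simp only [Pi.add_apply]
      rw [Finset.sum_add_distrib, sum_aj]
    refine ⟨⟨?_, show (∑ i, (α' + aj j k) i) < M by omega⟩,
      show α' j + aj j k j = k by simp [aj, hj0]⟩
    intro i
    show (α' + aj j k) i ≤ M
    rcases eq_or_ne i j with h | hij
    · rw [h, Pi.add_apply, hj0]
      simp [aj]
      omega
    · rw [Pi.add_apply, show aj j k i = 0 by simp [aj, hij], Nat.add_zero]
      have h4 : α' i ≤ M - k := hle i
      omega
  · -- left inverse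
    intro α hα
    simp only [Finset.mem_filter] at hα
    funext i
    rcases eq_or_ne i j with rfl | hij
    · simp [aj, hα.2]
    · simp [aj, hij, Function.update_of_ne hij]
  · -- right inverse
    intro α' hα'
    simp only [Finset.mem_filter] at hα'
    funext i
    rcases eq_or_ne i j with rfl | hij
    · simp [aj, hα'.2]
    · simp [aj, hij, Function.update_of_ne hij]
  · -- values match
    intro α hα
    simp only [Finset.mem_filter] at hα
    obtain ⟨-, hjk⟩ := hα
    have hj0 : Function.update α j 0 j = 0 := Function.update_self j 0 α
    have hrec : α = Function.update α j 0 + aj j k := by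
      funext i
      rcases eq_or_ne i j with h | hij
      · rw [h, Pi.add_apply, Function.update_self]
        simp [aj, hjk]
      · rw [Pi.add_apply, Function.update_of_ne hij, show aj j k i = 0 by simp [aj, hij],
          Nat.add_zero]
    conv_lhs => rw [hrec]
    exact term_split θ j k (Function.update α j 0) hj0 p ξ

lemma Tsum_split (j : Fin n) (M : ℕ) (θ : Fin n → ℤ) (p : (Fin n → ℤ) → ℂ)
    (ξ : Fin n → ℤ) :
    ∑ α ∈ (Finset.Iic (fun _ => M : Fin n → ℕ)).filter
        (fun α : Fin n → ℕ => (∑ i, α i) < M), term θ p ξ α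
    = ∑ k ∈ range M, C (θ j) k *
        ∑ α' ∈ (Finset.Iic (fun _ => M - k : Fin n → ℕ)).filter
          (fun α' : Fin n → ℕ => (∑ i, α' i) < M - k),
        term (Function.update θ j 0) (mdiff (aj j k) p) ξ α' := by
  rw [← Finset.sum_fiberwise_of_maps_to (g := fun α : Fin n → ℕ => α j)
    (t := range M) (fun α hα => by
      simp only [Finset.mem_filter, Finset.mem_Iic] at hα
      rw [Finset.mem_range]
      calc α j ≤ ∑ i, α i := Finset.single_le_sum (fun _ _ => Nat.zero_le _) (mem_univ j)
        _ < M := hα.2) (term θ p ξ)]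
  refine Finset.sum_congr rfl fun k hk => ?_
  rw [Finset.mem_range] at hk
  exact Tsum_fiber j M k hk θ p ξ

lemma oneD' (j : Fin n) (M : ℕ) (t : ℤ) (q : (Fin n → ℤ) → ℂ) (η : Fin n → ℤ) (B : ℝ)
    (hB : 0 ≤ B)
    (h : ∀ s : ℤ, min 0 t ≤ s → s ≤ max 0 t →
      ‖((tff t M : ℤ) : ℂ) * mdiff (aj j M) q (η + s • ejZ j)‖ ≤ B) :
    ‖q (η + t • ejZ j) - ∑ k ∈ range M, C t k * mdiff (aj j k) q η‖ ≤ B := by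
  rcases eq_or_ne (tff t M) 0 with h0 | h0
  · set B₀ := ∑ s ∈ Finset.Icc (min 0 t) (max 0 t), ‖mdiff (aj j M) q (η + s • ejZ j)‖
      with hB₀def
    have hB₀ : 0 ≤ B₀ := Finset.sum_nonneg fun _ _ => norm_nonneg _
    have hbound : ∀ s : ℤ, min 0 t ≤ s → s ≤ max 0 t →
        ‖mdiff (aj j M) q (η + s • ejZ j)‖ ≤ B₀ :=
      fun s h1 h2 => Finset.single_le_sum
        (f := fun s : ℤ => ‖mdiff (aj j M) q (η + s • ejZ j)‖)
        (fun _ _ => norm_nonneg _) (Finset.mem_Icc.2 ⟨h1, h2⟩)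
    calc ‖q (η + t • ejZ j) - ∑ k ∈ range M, C t k * mdiff (aj j k) q η‖
        ≤ (w t M : ℝ) * B₀ := oneD j M t q η B₀ hB₀ hbound
      _ = 0 := by rw [w_eq_zero_of_tff h0]; simp
      _ ≤ B := hB
  · have hN : (0:ℝ) < ‖((tff t M : ℤ) : ℂ)‖ := by
      rw [norm_pos_iff]
      exact_mod_cast h0
    have hB₀ : 0 ≤ B / ‖((tff t M : ℤ) : ℂ)‖ := div_nonneg hB hN.le
    have hbound : ∀ s : ℤ, min 0 t ≤ s → s ≤ max 0 t →
        ‖mdiff (aj j M) q (η + s • ejZ j)‖ ≤ B / ‖((tff t M : ℤ) : ℂ)‖ := by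
      intro s h1 h2
      rw [le_div_iff₀ hN]
      calc ‖mdiff (aj j M) q (η + s • ejZ j)‖ * ‖((tff t M : ℤ) : ℂ)‖
          = ‖((tff t M : ℤ) : ℂ) * mdiff (aj j M) q (η + s • ejZ j)‖ := by
            rw [norm_mul]; ring
        _ ≤ B := h s h1 h2
    calc ‖q (η + t • ejZ j) - ∑ k ∈ range M, C t k * mdiff (aj j k) q η‖
        ≤ (w t M : ℝ) * (B / ‖((tff t M : ℤ) : ℂ)‖) := oneD j M t q η _ hB₀ hbound
      _ ≤ ‖((tff t M : ℤ) : ℂ)‖ * (B / ‖((tff t M : ℤ) : ℂ)‖) := by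
          apply mul_le_mul_of_nonneg_right _ hB₀
          rw [norm_tff]
          have h1 : (1:ℝ) ≤ (M.factorial : ℝ) := by exact_mod_cast M.factorial_pos
          nlinarith [Nat.cast_nonneg (α := ℝ) (w t M)]
      _ = B := by field_simp

/-- the constant -/
noncomputable def cc : ℕ → ℕ → ℝ
  | 0, _ => 1
  | m + 1, M => 1 + ∑ k ∈ Finset.range M, cc m (M - k)

lemma one_le_cc : ∀ (m M : ℕ), 1 ≤ cc m M
  | 0, _ => le_refl 1
  | m + 1, M => by
    rw [cc]
    have : (0:ℝ) ≤ ∑ k ∈ Finset.range M, cc m (M - k) :=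
      Finset.sum_nonneg fun k _ => le_trans zero_le_one (one_le_cc m (M - k))
    linarith

lemma cc_nonneg (m M : ℕ) : 0 ≤ cc m M := le_trans zero_le_one (one_le_cc m M)

lemma rearrange (m : ℕ) (a : ℂ) (c x y : ℕ → ℂ) :
    a - ∑ k ∈ range m, c k * y k
    = (a - ∑ k ∈ range m, c k * x k) + ∑ k ∈ range m, c k * (x k - y k) := by
  rw [Finset.sum_congr rfl (fun k (_ : k ∈ range m) => mul_sub (c k) (x k) (y k)),
    Finset.sum_sub_distrib]
  ring

lemma multi (S : Finset (Fin n)) : ∀ (M : ℕ) (p : (Fin n → ℤ) → ℂ) (ξ θ : Fin n → ℤ),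
    (∀ i, i ∉ S → θ i = 0) → ∀ B : ℝ, 0 ≤ B →
    (∀ α : Fin n → ℕ, (∑ i, α i) = M → ∀ ν : Fin n → ℤ,
      (∀ i, min 0 (θ i) ≤ ν i ∧ ν i ≤ max 0 (θ i)) →
      ‖((mFallFac θ α : ℤ) : ℂ) * mdiff α p (ξ + ν)‖ ≤ B) →
    ‖p (ξ + θ) - ∑ α ∈ (Finset.Iic (fun _ => M : Fin n → ℕ)).filter
        (fun α : Fin n → ℕ => (∑ i, α i) < M), term θ p ξ α‖ ≤ cc S.card M * B := by
  induction S using Finset.induction_on with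
  | empty =>
    intro M p ξ θ hθ B hB h
    have hθ0 : θ = 0 := funext fun i => hθ i (Finset.notMem_empty i)
    subst hθ0
    rw [Finset.card_empty]
    have hFF1 : ((mFallFac (0 : Fin n → ℤ) 0 : ℤ) : ℂ) = 1 := by
      rw [mFallFac_eq]
      simp [tff_zero_right]
    rcases Nat.eq_zero_or_pos M with rfl | hM
    · rw [Finset.sum_eq_zero (fun α hα => absurd ((Finset.mem_filter.1 hα).2) (by omega)),
        sub_zero]
      have := h 0 (by simp) 0 (by intro i; simp)
      rw [hFF1, one_mul, mdiff_zero, add_zero] at this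
      simpa [cc] using this
    · have hmem : (0 : Fin n → ℕ) ∈ (Finset.Iic (fun _ => M : Fin n → ℕ)).filter
          (fun α : Fin n → ℕ => (∑ i, α i) < M) := by
        rw [Finset.mem_filter, Finset.mem_Iic]
        constructor
        · intro i; exact Nat.zero_le M
        · simpa using hM
      rw [Finset.sum_eq_single_of_mem 0 hmem (fun α _ hne => by
        obtain ⟨i, hi⟩ := Function.ne_iff.1 hne
        exact term_eq_zero i rfl (by simpa using hi))]
      have hterm : term (0 : Fin n → ℤ) p ξ 0 = p ξ := by
        rw [term, hFF1, mdiff_zero]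
        simp
      rw [hterm, add_zero, sub_self, norm_zero]
      exact mul_nonneg (cc_nonneg 0 M) hB
  | @insert j S' hjS ih =>
    intro M p ξ θ hθ B hB h
    have hsplit : ξ + θ = (ξ + Function.update θ j 0) + (θ j) • ejZ j := by
      funext i
      show ξ i + θ i = (ξ i + Function.update θ j 0 i) + θ j * ejZ j i
      rcases eq_or_ne i j with rfl | hij
      · rw [Function.update_self, ejZ, if_pos rfl]
        ring
      · rw [Function.update_of_ne hij, ejZ, if_neg hij]
        ring
    rw [hsplit, Tsum_split j M θ p ξ]
    have key := rearrange M (p ((ξ + Function.update θ j 0) + (θ j) • ejZ j))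
      (fun k => C (θ j) k) (fun k => mdiff (aj j k) p (ξ + Function.update θ j 0))
      (fun k => ∑ α' ∈ (Finset.Iic (fun _ => M - k : Fin n → ℕ)).filter
          (fun α' : Fin n → ℕ => (∑ i, α' i) < M - k),
        term (Function.update θ j 0) (mdiff (aj j k) p) ξ α')
    rw [key]
    have hA : ‖p ((ξ + Function.update θ j 0) + (θ j) • ejZ j)
        - ∑ k ∈ range M, C (θ j) k * mdiff (aj j k) p (ξ + Function.update θ j 0)‖ ≤ B := by
      apply oneD' j M (θ j) p (ξ + Function.update θ j 0) B hB
      intro s hs1 hs2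
      have hν : ∀ i, min 0 (θ i) ≤ (Function.update θ j 0 + s • ejZ j) i ∧
          (Function.update θ j 0 + s • ejZ j) i ≤ max 0 (θ i) := by
        intro i
        show min 0 (θ i) ≤ Function.update θ j 0 i + s * ejZ j i ∧
          Function.update θ j 0 i + s * ejZ j i ≤ max 0 (θ i)
        rcases eq_or_ne i j with rfl | hij
        · rw [Function.update_self, ejZ, if_pos rfl]
          constructor <;> [linarith [hs1]; linarith [hs2]]
        · rw [Function.update_of_ne hij, ejZ, if_neg hij]
          constructor
          · rw [mul_zero, add_zero]; exact min_le_right 0 (θ i)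
          · rw [mul_zero, add_zero]; exact le_max_right 0 (θ i)
      have hmain := h (aj j M) (sum_aj j M) (Function.update θ j 0 + s • ejZ j) hν
      rw [mFallFac_aj, ← add_assoc] at hmain
      exact hmain
    have hDk : ∀ k ∈ range M,
        ‖C (θ j) k * (mdiff (aj j k) p (ξ + Function.update θ j 0)
          - ∑ α' ∈ (Finset.Iic (fun _ => M - k : Fin n → ℕ)).filter
              (fun α' : Fin n → ℕ => (∑ i, α' i) < M - k),
            term (Function.update θ j 0) (mdiff (aj j k) p) ξ α')‖
        ≤ cc S'.card (M - k) * B := by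
      intro k hk
      rw [Finset.mem_range] at hk
      have hccB : 0 ≤ cc S'.card (M - k) * B := mul_nonneg (cc_nonneg _ _) hB
      rcases eq_or_ne (tff (θ j) k) 0 with h0 | h0
      · rw [show C (θ j) k = 0 by rw [C, h0]; simp, zero_mul, norm_zero]
        exact hccB
      · have hN : (0:ℝ) < ‖((tff (θ j) k : ℤ) : ℂ)‖ := by
          rw [norm_pos_iff]; exact_mod_cast h0
        have hθ'supp : ∀ i, i ∉ S' → Function.update θ j 0 i = 0 := by
          intro i hi
          rcases eq_or_ne i j with rfl | hij
          · exact Function.update_self _ 0 θ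
          · rw [Function.update_of_ne hij]
            exact hθ i (by rw [Finset.mem_insert]; push_neg; exact ⟨hij, hi⟩)
        have hB' : ∀ α' : Fin n → ℕ, (∑ i, α' i) = M - k → ∀ ν' : Fin n → ℤ,
            (∀ i, min 0 (Function.update θ j 0 i) ≤ ν' i ∧
              ν' i ≤ max 0 (Function.update θ j 0 i)) →
            ‖((mFallFac (Function.update θ j 0) α' : ℤ) : ℂ) *
              mdiff α' (mdiff (aj j k) p) (ξ + ν')‖ ≤ B / ‖((tff (θ j) k : ℤ) : ℂ)‖ := by
          intro α' hαsum ν' hν'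
          rcases eq_or_ne (α' j) 0 with hj0 | hj0
          · have hν'j : ν' j = 0 := by
              have := hν' j
              rw [Function.update_self] at this
              simp only [min_self, max_self] at this
              omega
            have hνθ : ∀ i, min 0 (θ i) ≤ ν' i ∧ ν' i ≤ max 0 (θ i) := by
              intro i
              rcases eq_or_ne i j with rfl | hij
              · rw [hν'j]
                exact ⟨min_le_left 0 _, le_max_left 0 _⟩
              · have := hν' i
                rwa [Function.update_of_ne hij] at this
            have hαM : (∑ i, (α' + aj j k) i) = M := by
              simp only [Pi.add_apply]
              rw [Finset.sum_add_distrib, sum_aj, hαsum]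
              omega
            have hmain := h (α' + aj j k) hαM ν' hνθ
            rw [mFallFac_split θ j k hj0, mdiff_add α' (aj j k) p (ξ + ν')] at hmain
            rw [le_div_iff₀ hN]
            calc ‖((mFallFac (Function.update θ j 0) α' : ℤ) : ℂ) *
                  mdiff α' (mdiff (aj j k) p) (ξ + ν')‖ * ‖((tff (θ j) k : ℤ) : ℂ)‖
                = ‖((mFallFac (Function.update θ j 0) α' * tff (θ j) k : ℤ) : ℂ) *
                    mdiff α' (fun η => mdiff (aj j k) p η) (ξ + ν')‖ := by
                  rw [← norm_mul]
                  push_cast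
                  congr 1
                  ring
              _ ≤ B := hmain
          · rw [mFallFac_eq_zero j (Function.update_self j 0 θ) hj0]
            simp only [Int.cast_zero, zero_mul, norm_zero]
            exact div_nonneg hB hN.le
        have hIH := ih (M - k) (mdiff (aj j k) p) ξ (Function.update θ j 0) hθ'supp
          (B / ‖((tff (θ j) k : ℤ) : ℂ)‖) (div_nonneg hB hN.le) hB'
        rw [norm_mul, norm_C]
        calc (w (θ j) k : ℝ) * ‖mdiff (aj j k) p (ξ + Function.update θ j 0)
              - ∑ α' ∈ (Finset.Iic (fun _ => M - k : Fin n → ℕ)).filter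
                  (fun α' : Fin n → ℕ => (∑ i, α' i) < M - k),
                term (Function.update θ j 0) (mdiff (aj j k) p) ξ α'‖
            ≤ (w (θ j) k : ℝ) * (cc S'.card (M - k) * (B / ‖((tff (θ j) k : ℤ) : ℂ)‖)) := by
              apply mul_le_mul_of_nonneg_left _ (Nat.cast_nonneg _)
              exact hIH
          _ ≤ ‖((tff (θ j) k : ℤ) : ℂ)‖ *
              (cc S'.card (M - k) * (B / ‖((tff (θ j) k : ℤ) : ℂ)‖)) := by
              apply mul_le_mul_of_nonneg_right
              · rw [norm_tff]
                have h1 : (1:ℝ) ≤ (k.factorial : ℝ) := by exact_mod_cast k.factorial_pos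
                nlinarith [Nat.cast_nonneg (α := ℝ) (w (θ j) k)]
              · exact mul_nonneg (cc_nonneg _ _) (div_nonneg hB hN.le)
          _ = cc S'.card (M - k) * B := by field_simp
    calc ‖(p ((ξ + Function.update θ j 0) + (θ j) • ejZ j)
          - ∑ k ∈ range M, C (θ j) k * mdiff (aj j k) p (ξ + Function.update θ j 0))
        + ∑ k ∈ range M, C (θ j) k * (mdiff (aj j k) p (ξ + Function.update θ j 0)
          - ∑ α' ∈ (Finset.Iic (fun _ => M - k : Fin n → ℕ)).filter
              (fun α' : Fin n → ℕ => (∑ i, α' i) < M - k),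
            term (Function.update θ j 0) (mdiff (aj j k) p) ξ α')‖
        ≤ _ + ‖∑ k ∈ range M, _‖ := norm_add_le _ _
      _ ≤ B + ∑ k ∈ range M, cc S'.card (M - k) * B := by
          apply add_le_add hA
          exact le_trans (norm_sum_le _ _) (Finset.sum_le_sum hDk)
      _ = cc (S'.card + 1) M * B := by
          rw [cc, add_mul, one_mul, Finset.sum_mul]
      _ = cc (insert j S').card M * B := by
          rw [Finset.card_insert_of_notMem hjS]

lemma mdiff_comm_aux (ω α : Fin n → ℕ) (p : (Fin n → ℤ) → ℂ) (ξ : Fin n → ℤ) :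
    mdiff ω (fun η => mdiff α p η) ξ = mdiff α (fun η => mdiff ω p η) ξ := by
  rw [← mdiff_add, ← mdiff_add, add_comm]

end MDT

/-- Multivariate discrete Taylor remainder estimate: there is a constant `c`
depending only on `M` and `n` such that for every multi-index `ω`, every
`p : ℤⁿ → ℂ` and all `ξ, θ`, any uniform bound `B` on
`|θ^{(α)} Δ^{α+ω} p(ξ+ν)|` over `|α| = M` and `ν ∈ Q(θ)` bounds
`|Δ^ω r_M(ξ,θ)|` up to the factor `c`. -/
theorem multivariate_discrete_taylor_remainder (n M : ℕ) :
    ∃ c : ℝ, 0 < c ∧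
      ∀ (ω : Fin n → ℕ) (p : (Fin n → ℤ) → ℂ) (ξ θ : Fin n → ℤ) (B : ℝ),
        0 ≤ B →
        (∀ (α : Fin n → ℕ), (∑ j, α j) = M →
          ∀ ν ∈ Finset.Icc (fun j => min 0 (θ j)) (fun j => max 0 (θ j)),
            ‖(mFallFac θ α : ℂ) * mdiff (α + ω) p (fun j => ξ j + ν j)‖ ≤ B) →
        ‖mdiff ω (fun η => p (fun j => η j + θ j) -
            ∑ α ∈ (Finset.Iic (fun _ => M)).filter (fun α : Fin n → ℕ => (∑ j, α j) < M),
              (1 / ((∏ j, (α j).factorial : ℕ) : ℂ)) * (mFallFac θ α : ℂ) *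
                mdiff α p η) ξ‖ ≤ c * B := by
  refine ⟨MDT.cc n M, lt_of_lt_of_le one_pos (MDT.one_le_cc n M), ?_⟩
  intro ω p ξ θ B hB h
  set T := (Finset.Iic (fun _ => M : Fin n → ℕ)).filter
    (fun α : Fin n → ℕ => (∑ j, α j) < M) with hT
  have step1 : mdiff ω (fun η => p (fun j => η j + θ j) -
      ∑ α ∈ T, (1 / ((∏ j, (α j).factorial : ℕ) : ℂ)) * (mFallFac θ α : ℂ) *
        mdiff α p η) ξ
      = mdiff ω p (fun j => ξ j + θ j) - ∑ α ∈ T, MDT.term θ (mdiff ω p) ξ α := by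
    rw [MDT.mdiff_sub_fun, MDT.mdiff_shift, MDT.mdiff_sum_fun]
    congr 1
    refine Finset.sum_congr rfl fun α hα => ?_
    rw [show (fun η => (1 / ((∏ j, (α j).factorial : ℕ) : ℂ)) * (mFallFac θ α : ℂ) *
        mdiff α p η)
      = (fun η => ((1 / ((∏ j, (α j).factorial : ℕ) : ℂ)) * (mFallFac θ α : ℂ)) *
        mdiff α p η) from rfl]
    rw [MDT.mdiff_const_mul, MDT.term, MDT.mdiff_comm_aux]
  rw [step1]
  have happ := MDT.multi Finset.univ M (mdiff ω p) ξ θ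
    (fun i hi => absurd (Finset.mem_univ i) hi) B hB ?_
  · rw [Finset.card_univ, Fintype.card_fin] at happ
    exact happ
  · intro α hα ν hν
    have hmem : ν ∈ Finset.Icc (fun j => min 0 (θ j)) (fun j => max 0 (θ j)) := by
      rw [Finset.mem_Icc]
      constructor <;> intro i
      · exact (hν i).1
      · exact (hν i).2
    have := h α hα ν hmem
    rw [MDT.mdiff_add] at this
    exact this
end
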